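/- arXiv:1304.0801 — 3 statements merged into one kernel-verified Lean document; each statement's English description precedes it below -/
import Mathlib

section
/- Let p(z)=Σ_{k≥0} a_k z^k and q(z)=Σ_{k≥0} b_k z^k be formal power series with real coefficients, a_0 = 1, and suppose β := b_1 − a_1 b_0 ≠ 0. Define the formal power series p_1(z) := (q(z) − b_0 p(z))/(β z). Then for all integers k ≥ 2 and i ≥ k, the minor of H(p,q) on rows 2,3,…,k,k+1 and columns 2,3,…,k,i+1 equals β^{⌊k/2⌋} times the minor of H(p_1,p) on rows 2,3,…,k−1,k and columns 2,3,…,k−1,i. -/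
/-!
Since `q = b₀ p + β z p₁`, the row of `H(p,q)` holding the coefficients of `q` with shift `j` is
`b₀` times the `p`-row of `H(p₁,p)` with the same shift plus `β` times the `p₁`-row just below it,
while the `p`-rows of `H(p,q)` are `p`-rows of `H(p₁,p)` one position lower. So the first minor
factors as a lower bidiagonal matrix with diagonal `1, β, 1, β, …` times a minor of `H(p₁,p)`
whose first column is `(1, 0, …, 0)`; expanding along it and using `H_{r+2,c+1} = H_{r,c}` gives
the second minor.
-/

noncomputable section

/-- Coefficient extraction from a sequence, zero for negative indices. -/
def coeffZ (f : ℕ → ℝ) (n : ℤ) : ℝ := if 0 ≤ n then f n.toNat else 0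

/-- The infinite Hurwitz-type matrix `H(p,q)` of the pair of series with coefficient
sequences `a` (for `p`) and `b` (for `q`), using 0-based indices: row `2j` is
`(…, b_{c-j}, …)` and row `2j+1` is `(…, a_{c-j-1}, …)`, i.e. the rows are
`(b₀,b₁,b₂,…)`, `(0,a₀,a₁,…)`, `(0,b₀,b₁,…)`, `(0,0,a₀,…)`, `(0,0,b₀,…)`, …. -/
def Hmat (a b : ℕ → ℝ) (r c : ℕ) : ℝ :=
  if r % 2 = 0 then coeffZ b ((c : ℤ) - (r / 2 : ℕ)) else coeffZ a ((c : ℤ) - (r / 2 : ℕ) - 1)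

open Matrix

def lowerBidiag {R : Type*} [Zero R] (k : ℕ) (d c : ℕ → R) : Matrix (Fin k) (Fin k) R :=
  Matrix.of fun l m => if l = m then d l else if (l : ℕ) = m + 1 then c l else 0

section Determinants

variable {R : Type*} [CommRing R]

theorem Matrix.det_eq_mul_det_submatrix_succ {n : ℕ} (A : Matrix (Fin (n + 1)) (Fin (n + 1)) R)
    (hA : ∀ l, l ≠ 0 → A l 0 = 0) : A.det = A 0 0 * (A.submatrix Fin.succ Fin.succ).det := by
  rw [det_succ_column_zero,
    Fintype.sum_eq_single 0 fun l hl => by rw [hA l hl, mul_zero, zero_mul]]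
  simp

theorem lowerBidiag_isLowerTriangular (k : ℕ) (d c : ℕ → R) :
    (lowerBidiag k d c).IsLowerTriangular := by
  intro l m hlm
  have : (l : ℕ) < m := hlm
  simp only [lowerBidiag, of_apply]
  rw [if_neg (by omega), if_neg (by omega)]

theorem det_lowerBidiag (k : ℕ) (d c : ℕ → R) :
    (lowerBidiag k d c).det = ∏ l : Fin k, d l := by
  rw [det_of_isLowerTriangular _ (lowerBidiag_isLowerTriangular k d c)]
  simp [lowerBidiag]

theorem lowerBidiag_mul_of_apply {k : ℕ} (d c : ℕ → R) (hc : c 0 = 0) (F : ℕ → Fin k → R)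
    (l j : Fin k) :
    (lowerBidiag k d c * Matrix.of fun (l : Fin k) j => F l j) l j =
      d l * F l j + c l * F (l - 1) j := by
  rw [mul_apply]
  obtain ⟨_ | l, hl⟩ := l
  · rw [Fintype.sum_eq_single ⟨0, hl⟩]
    · simp [lowerBidiag, hc]
    · intro m hm
      simp [lowerBidiag, Ne.symm hm]
  · rw [Fintype.sum_eq_add ⟨l + 1, hl⟩ ⟨l, by omega⟩ (by simp [Fin.ext_iff])]
    · simp [lowerBidiag]
    · rintro m ⟨h₁, h₂⟩
      simp only [lowerBidiag, of_apply]
      rw [if_neg (Ne.symm h₁), if_neg fun h => h₂ (Fin.ext (by simp only at h ⊢; omega)),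
        zero_mul]

end Determinants

theorem prod_range_ite_odd_eq_pow {M : Type*} [CommMonoid M] (β : M) (k : ℕ) :
    ∏ l ∈ Finset.range k, (if l % 2 = 1 then β else 1) = β ^ (k / 2) := by
  induction k with
  | zero => simp
  | succ k ih =>
    rw [Finset.prod_range_succ, ih]
    split_ifs with h
    · rw [show (k + 1) / 2 = k / 2 + 1 by omega, pow_succ]
    · rw [show (k + 1) / 2 = k / 2 by omega, mul_one]

theorem coeffZ_eq_mul_add_mul_coeffZ_sub_one {a b p : ℕ → ℝ} {β : ℝ} (ha0 : a 0 = 1)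
    (hp : ∀ k, β * p k = b (k + 1) - b 0 * a (k + 1)) (m : ℤ) :
    coeffZ b m = b 0 * coeffZ a m + β * coeffZ p (m - 1) := by
  unfold coeffZ
  rcases lt_trichotomy m 0 with hm | rfl | hm
  · rw [if_neg (by omega), if_neg (by omega), if_neg (by omega)]
    ring
  · simp [ha0]
  · rw [if_pos hm.le, if_pos hm.le, if_pos (by omega), hp,
      show m.toNat = (m - 1).toNat + 1 by omega]
    ring

section Hmat

variable (x y : ℕ → ℝ)

theorem Hmat_add_two_add_one (r c : ℕ) : Hmat x y (r + 2) (c + 1) = Hmat x y r c := by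
  simp only [Hmat, show (r + 2) % 2 = r % 2 by omega, show (r + 2) / 2 = r / 2 + 1 by omega]
  split_ifs <;> congr 1 <;> push_cast <;> ring

theorem Hmat_eq_zero_of_lt {r c : ℕ} (h : 2 * c < r) : Hmat x y r c = 0 := by
  unfold Hmat coeffZ
  split_ifs <;> first | rfl | omega

theorem Hmat_two_mul_self (c : ℕ) : Hmat x y (2 * c) c = y 0 := by
  simp [Hmat, coeffZ]

end Hmat

theorem det_Hmat_minor_eq_det_Hmat_minor_shift (x : ℕ → ℝ) {y : ℕ → ℝ} (hy : y 0 = 1) {n : ℕ}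
    (col : Fin (n + 1) → ℕ) (col' : Fin n → ℕ) (h0 : col 0 = 1)
    (hsucc : ∀ m, col m.succ = col' m + 1) :
    (Matrix.of fun l m : Fin (n + 1) => Hmat x y (l + 2) (col m)).det =
      (Matrix.of fun l m : Fin n => Hmat x y (l + 1) (col' m)).det := by
  have hcol : ∀ l, l ≠ 0 →
      (Matrix.of fun l m : Fin (n + 1) => Hmat x y (l + 2) (col m)) l 0 = 0 := by
    intro l hl
    have : 0 < (l : ℕ) := Fin.val_pos_iff.mpr ((Fin.pos_iff_ne_zero' l).mpr hl)
    rw [of_apply, h0]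
    exact Hmat_eq_zero_of_lt x y (by omega)
  have h00 : Hmat x y 2 1 = 1 := (Hmat_two_mul_self x y 1).trans hy
  rw [det_eq_mul_det_submatrix_succ _ hcol, of_apply, h0, Fin.val_zero, zero_add, h00, one_mul]
  congr 1
  ext l m
  simp only [submatrix_apply, of_apply, Fin.val_succ, hsucc]
  exact Hmat_add_two_add_one x y (l + 1) (col' m)

section Quotient

variable {a b p : ℕ → ℝ} {β : ℝ} (ha0 : a 0 = 1) (hp : ∀ k, β * p k = b (k + 1) - b 0 * a (k + 1))
include ha0 hp

theorem Hmat_succ_eq_add (l c : ℕ) :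
    Hmat a b (l + 1) c = (if l % 2 = 1 then β else 1) * Hmat p a (l + 2) c +
      (if l % 2 = 1 then b 0 else 0) * Hmat p a (l + 1) c := by
  unfold Hmat
  split_ifs <;> try omega
  · rw [coeffZ_eq_mul_add_mul_coeffZ_sub_one ha0 hp,
      show (l + 2) / 2 = (l + 1) / 2 by omega]
    ring
  · rw [show (l + 2) / 2 = l / 2 + 1 by omega, show (l + 1) / 2 = l / 2 by omega, one_mul,
      zero_mul, add_zero]
    congr 1
    push_cast
    ring

theorem Hmat_minor_eq_lowerBidiag_mul {k : ℕ} (col : Fin k → ℕ) :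
    (Matrix.of fun l m : Fin k => Hmat a b (l + 1) (col m)) =
      lowerBidiag k (fun l => if l % 2 = 1 then β else 1) (fun l => if l % 2 = 1 then b 0 else 0) *
        Matrix.of fun (l : Fin k) m => Hmat p a (l + 2) (col m) := by
  ext l m
  rw [lowerBidiag_mul_of_apply _ _ (by simp) (fun l m => Hmat p a (l + 2) (col m)), of_apply,
    Hmat_succ_eq_add ha0 hp]
  rcases Nat.eq_zero_or_pos (l : ℕ) with hl | hl
  · simp [hl]
  · rw [show (l : ℕ) - 1 + 2 = l + 1 by omega]

end Quotient

/-- In the 0-based indexing used here, the first minor is over rows `1,…,k` and columns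
`1,…,k-1,i`, and the second over rows `1,…,k-1` and columns `1,…,k-2,i-1`. -/
theorem stmt5 (a b : ℕ → ℝ) (ha0 : a 0 = 1)
    (hβ : b 1 - a 1 * b 0 ≠ 0)
    (p₁ : ℕ → ℝ) (hp₁ : ∀ k, p₁ k = (b (k + 1) - b 0 * a (k + 1)) / (b 1 - a 1 * b 0)) :
    ∀ k i : ℕ, 2 ≤ k → k ≤ i →
      (Matrix.of fun l m : Fin k =>
          Hmat a b ((l : ℕ) + 1) (if (m : ℕ) < k - 1 then (m : ℕ) + 1 else i)).det =
        (b 1 - a 1 * b 0) ^ (k / 2) *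
          (Matrix.of fun l m : Fin (k - 1) =>
            Hmat p₁ a ((l : ℕ) + 1) (if (m : ℕ) < k - 2 then (m : ℕ) + 1 else i - 1)).det := by
  intro k i hk hki
  obtain ⟨n, rfl⟩ : ∃ n, k = n + 2 := ⟨k - 2, by omega⟩
  have hp : ∀ k, (b 1 - a 1 * b 0) * p₁ k = b (k + 1) - b 0 * a (k + 1) := fun k => by
    rw [hp₁, mul_div_cancel₀ _ hβ]
  rw [Hmat_minor_eq_lowerBidiag_mul ha0 hp, det_mul, det_lowerBidiag,
    Fin.prod_univ_eq_prod_range (fun l => if l % 2 = 1 then _ else 1), prod_range_ite_odd_eq_pow]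
  congr 1
  refine det_Hmat_minor_eq_det_Hmat_minor_shift p₁ ha0 _ _ (by simp) fun m => ?_
  simp only [Fin.val_succ]
  split_ifs <;> omega

end
end

section
/- Let p(z)=Σ_{k≥0} a_k z^k and q(z)=Σ_{k≥0} b_k z^k be real formal power series with a_0 = 1, b_0 ≥ 0 and q not identically zero. Suppose that every minor of H(p,q) on rows 2,3,…,k−1,k and columns 2,3,…,k−1,i is nonnegative, for all integers k ≥ 2 and i ≥ k. Then q(z) = b_0·p(z) as formal power series if and only if b_1 − a_1 b_0 = 0 (this quantity being the 2×2 minor of H(p,q) on rows {2,3} and columns {2,3}). -/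
/-!
For `n ≥ 2` only two minors matter. The `2 × 2` minor with `k = 3`, `i = n + 2` is
`b_n - b₀ aₙ`, and the `3 × 3` minor with `k = 4`, `i = n + 2`, expanded along its last
column, equals `(b₁ - a₁ b₀) a_{n-1}` minus that `2 × 2` minor. When `b₁ - a₁ b₀ = 0`
both minors are nonnegative and opposite, so `bₙ = b₀ aₙ`.
-/

noncomputable section

def hurwitzMinor (a b : ℕ → ℝ) (k i : ℕ) : ℝ :=
  (Matrix.of fun l m : Fin (k - 1) =>
    Hmat a b ((l : ℕ) + 1) (if (m : ℕ) < k - 2 then (m : ℕ) + 1 else i - 1)).det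

@[simp]
lemma coeffZ_natCast (f : ℕ → ℝ) (n : ℕ) : coeffZ f n = f n := by
  simp [coeffZ]

@[simp]
lemma coeffZ_neg_one (f : ℕ → ℝ) : coeffZ f (-1) = 0 := by
  simp [coeffZ]

section

variable (a b : ℕ → ℝ) (c : ℕ)

lemma Hmat_one : Hmat a b 1 (c + 1) = a c := by
  simp [Hmat]

lemma Hmat_two : Hmat a b 2 (c + 1) = b c := by
  simp [Hmat]

lemma Hmat_three : Hmat a b 3 (c + 2) = a c := by
  simp [Hmat, add_sub_assoc]

lemma Hmat_three_one : Hmat a b 3 1 = 0 := by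
  simp [Hmat]

lemma hurwitzMinor_three : hurwitzMinor a b 3 (c + 2) = a 0 * b c - b 0 * a c := by
  simp [hurwitzMinor, Matrix.det_fin_two, Hmat_one, Hmat_two, mul_comm]

lemma hurwitzMinor_four :
    hurwitzMinor a b 4 (c + 3) =
      (a 0 * b 1 - a 1 * b 0) * a c - a 0 * hurwitzMinor a b 3 (c + 3) := by
  rw [show hurwitzMinor a b 3 (c + 3) = _ from hurwitzMinor_three a b (c + 1)]
  simp only [hurwitzMinor, Nat.add_one_sub_one, Nat.reduceSub, Order.lt_two_iff, Matrix.det_fin_three,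
    Fin.isValue, Matrix.of_apply, Fin.coe_ofNat_eq_mod, Nat.zero_mod, zero_add, zero_le, ↓reduceIte, Hmat_one,
    Nat.one_mod, Nat.reduceAdd, Std.le_refl, Hmat_two, Nat.mod_succ, Nat.not_ofNat_le_one, Hmat_three, Hmat_three_one,
    mul_zero, add_zero, sub_zero]
  ring

end

theorem stmt14_general (a b : ℕ → ℝ) (ha0 : a 0 = 1)
    (hm : ∀ k i : ℕ, 2 ≤ k → k ≤ i →
      0 ≤ (Matrix.of fun l m : Fin (k - 1) =>
            Hmat a b ((l : ℕ) + 1) (if (m : ℕ) < k - 2 then (m : ℕ) + 1 else i - 1)).det) :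
    (∀ k, b k = b 0 * a k) ↔ b 1 - a 1 * b 0 = 0 := by
  refine ⟨fun h => by rw [h 1]; ring, fun h k => ?_⟩
  match k with
  | 0 => rw [ha0, mul_one]
  | 1 => linarith
  | n + 2 =>
    have h3 : 0 ≤ hurwitzMinor a b 3 (n + 4) := hm 3 (n + 4) (by norm_num) (by omega)
    have h4 : 0 ≤ hurwitzMinor a b 4 (n + 4) := hm 4 (n + 4) (by norm_num) (by omega)
    rw [hurwitzMinor_four, ha0, one_mul, h, zero_mul, zero_sub, one_mul, neg_nonneg] at h4
    rw [hurwitzMinor_three, ha0, one_mul] at h3 h4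
    linarith

/-- Suppose every minor of `H(p,q)` on rows `2,…,k` and columns `2,…,k-1,i` (1-based;
i.e. rows `1,…,k-1` and columns `1,…,k-2,i-1`, 0-based) is nonnegative for all `k ≥ 2`
and `i ≥ k`.  Then `q = b₀·p` (as formal power series) iff `b₁ - a₁b₀ = 0`. -/
theorem stmt14 (a b : ℕ → ℝ) (ha0 : a 0 = 1) (hb0 : 0 ≤ b 0)
    (hbne : ∃ k, b k ≠ 0)
    (hm : ∀ k i : ℕ, 2 ≤ k → k ≤ i →
      0 ≤ (Matrix.of fun l m : Fin (k - 1) =>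
            Hmat a b ((l : ℕ) + 1) (if (m : ℕ) < k - 2 then (m : ℕ) + 1 else i - 1)).det) :
    (∀ k, b k = b 0 * a k) ↔ b 1 - a 1 * b 0 = 0 :=
  stmt14_general a b ha0 hm

end
end

section
/- Let (τ_ν)_{ν≥1} and (σ_ν)_{ν≥1} be real sequences with 0 < τ_1 < σ_1 < τ_2 < σ_2 < τ_3 < ⋯ and Σ_{ν≥1} 1/τ_ν < ∞. Then the infinite product G(z) = ∏_{ν≥1} (1+z/τ_ν)/(1+z/σ_ν) converges to a meromorphic function on ℂ, and for every z with Im z > 0 the principal argument of G(z) satisfies 0 < Arg G(z) < π. In particular, G is an S-function. -/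
/-!
Since `∑ 1/σ_n ≤ ∑ 1/τ_n < ∞`, both `P(z) = ∏ (1 + z/τ_n)` and `Q(z) = ∏ (1 + z/σ_n)` are
entire, and the product of the quotients is `P/Q` everywhere (at a pole both sides are `0`,
by the convention `x / 0 = 0`). For `Im z > 0` write `P = exp S`, `Q = exp T` with `S`, `T`
the sums of the logarithms of the factors. Then `Im (S - T)` is the alternating series
`arg(1 + z/τ_0) - arg(1 + z/σ_0) + arg(1 + z/τ_1) - ⋯`, whose terms strictly decrease because
`t ↦ arg(1 + z/t)` does on `(0, ∞)`; hence it lies in `(0, arg(1 + z/τ_0)) ⊆ (0, π)` and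
equals `arg (P/Q)`. Symmetry under conjugation and positivity of the factors on `[0, ∞)`
give the S-function property.
-/

noncomputable section

/-- A meromorphic function on `ℂ` is an R-function if it is real on `ℝ` (where defined)
and `Im F(z) · Im z ≥ 0` for all non-real `z` in its domain. -/
def RFun (F : ℂ → ℂ) : Prop :=
  (∀ z : ℂ, MeromorphicAt F z) ∧
  (∀ x : ℝ, AnalyticAt ℂ F (x : ℂ) → (F (x : ℂ)).im = 0) ∧
  (∀ z : ℂ, z.im ≠ 0 → AnalyticAt ℂ F z → 0 ≤ (F z).im * z.im)

/-- An R-function is an S-function if in addition it is analytic and nonnegative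
on `[0, ∞)`. -/
def SFun (F : ℂ → ℂ) : Prop :=
  RFun F ∧ ∀ x : ℝ, 0 ≤ x → AnalyticAt ℂ F (x : ℂ) ∧ 0 ≤ (F (x : ℂ)).re

open Complex ComplexConjugate Metric Real
open scoped ComplexOrder

section LinearFactors

variable {a b : ℕ → ℂ}

lemma summable_norm_div_of_norm_inv (ha : Summable fun n => ‖(a n)⁻¹‖) (z : ℂ) :
    Summable fun n => ‖z / a n‖ := by
  simpa [div_eq_mul_inv] using ha.mul_left ‖z‖

theorem differentiable_tprod_one_add_div (ha : Summable fun n => ‖(a n)⁻¹‖) :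
    Differentiable ℂ fun z => ∏' n, (1 + z / a n) := by
  intro z₀
  set R := ‖z₀‖ + 1
  have hprod : HasProdLocallyUniformlyOn (fun n z => 1 + z / a n)
      (fun z => ∏' n, (1 + z / a n)) (ball 0 R) := by
    refine (ha.mul_left R).hasProdLocallyUniformlyOn_one_add isOpen_ball
      (.of_forall fun n z hz => ?_) fun n => by fun_prop
    rw [norm_div, div_eq_mul_inv, ← norm_inv]
    exact mul_le_mul_of_nonneg_right (mem_ball_zero_iff.mp hz).le (norm_nonneg _)
  refine (hprod.differentiableOn (.of_forall fun s => ?_) isOpen_ball).differentiableAt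
    (isOpen_ball.mem_nhds (by simp [R]))
  simpa [Finset.prod_fn] using DifferentiableOn.finsetProd fun n _ => by fun_prop

theorem hasProd_one_add_div_div (ha : Summable fun n => ‖(a n)⁻¹‖)
    (hb : Summable fun n => ‖(b n)⁻¹‖) (z : ℂ) :
    HasProd (fun n => (1 + z / a n) / (1 + z / b n))
      ((∏' n, (1 + z / a n)) / ∏' n, (1 + z / b n)) := by
  by_cases hpole : ∃ n, 1 + z / b n = 0
  · rw [tprod_of_exists_eq_zero hpole, div_zero]
    obtain ⟨n, hn⟩ := hpole
    exact hasProd_zero_of_exists_eq_zero ⟨n, by simp [hn]⟩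
  · push Not at hpole
    exact (multipliable_one_add_of_summable (summable_norm_div_of_norm_inv ha z)).hasProd.div₀
      (multipliable_one_add_of_summable (summable_norm_div_of_norm_inv hb z)).hasProd
      (tprod_one_add_ne_zero_of_summable hpole (summable_norm_div_of_norm_inv hb z))

end LinearFactors

lemma summable_norm_inv_ofReal {t : ℕ → ℝ} (ht : ∀ n, 0 < t n)
    (h : Summable fun n => 1 / t n) : Summable fun n => ‖((t n : ℂ))⁻¹‖ :=
  h.congr fun n => by simp [abs_of_pos (ht n)]

lemma Complex.zero_lt_one_add_ofReal_div {x t : ℝ} (hx : 0 ≤ x) (ht : 0 < t) :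
    0 < 1 + (x : ℂ) / t := by
  have : 1 + (x : ℂ) / t = ((1 + x / t : ℝ) : ℂ) := by push_cast; ring
  rw [this, zero_lt_real]
  positivity

lemma tprod_one_add_conj_div_ofReal {t : ℕ → ℝ} (ht : Summable fun n => ‖((t n : ℂ))⁻¹‖)
    (z : ℂ) : ∏' n, (1 + conj z / t n) = conj (∏' n, (1 + z / t n)) := by
  rw [(multipliable_one_add_of_summable (summable_norm_div_of_norm_inv ht z)).map_tprod _
    continuous_conj]
  simp

lemma Complex.arg_pos_of_im_pos {w : ℂ} (hw : 0 < w.im) : 0 < arg w :=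
  (arg_nonneg_iff.2 hw.le).lt_of_ne fun h => hw.ne' (arg_eq_zero_iff.1 h.symm).2

lemma Complex.arg_div_of_im_pos {u v : ℂ} (hu : 0 < u.im) (hv : 0 < v.im) :
    arg (u / v) = arg u - arg v := by
  have hu0 : u ≠ 0 := fun h => by simp [h] at hu
  have hv0 : v ≠ 0 := fun h => by simp [h] at hv
  have hvπ : arg v < π := arg_lt_pi_iff.2 (Or.inr hv.ne')
  have hdiv := arg_div_coe_angle hu0 hv0
  rw [← Real.Angle.coe_sub, arg_coe_angle_eq_iff_eq_toReal] at hdiv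
  rw [hdiv, Real.Angle.toReal_coe_eq_self_iff]
  constructor <;> linarith [arg_nonneg_iff.2 hu.le, arg_nonneg_iff.2 hv.le, arg_le_pi u]

lemma arg_one_add_div_lt_of_lt {z : ℂ} (hz : 0 < z.im) {s t : ℝ} (hs : 0 < s) (hst : s < t) :
    arg (1 + z / t) < arg (1 + z / s) := by
  have ht : 0 < t := hs.trans hst
  have him : ∀ r : ℝ, 0 < r → 0 < (1 + z / r).im := fun r hr => by
    simpa using div_pos hz hr
  have hquot : 0 < ((1 + z / s) / (1 + z / t)).im := by
    rw [div_im, ← sub_div]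
    refine div_pos ?_ (normSq_pos.2 fun h => (him t ht).ne' (by simp [h]))
    simp only [add_re, add_im, one_re, one_im, div_ofReal_re, div_ofReal_im]
    have key : (0 + z.im / s) * (1 + z.re / t) - (1 + z.re / s) * (0 + z.im / t)
        = z.im / s - z.im / t := by ring
    rw [key, sub_pos]
    exact div_lt_div_of_pos_left hz hs hst
  have := arg_pos_of_im_pos hquot
  rw [arg_div_of_im_pos (him s hs) (him t ht)] at this
  linarith

lemma sub_pos_and_sub_lt_of_interlacing {a b : ℕ → ℝ} {A B : ℝ} (hA : HasSum a A)
    (hB : HasSum b B) (hba : ∀ n, b n < a n) (hab : ∀ n, a (n + 1) < b n) :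
    0 < A - B ∧ A - B < a 0 := by
  have hlow : B < A := hasSum_lt (fun n => (hba n).le) (hba 0) hB hA
  have hshift : HasSum (fun n => a (n + 1)) (A - a 0) := by
    simpa using (hasSum_nat_add_iff' 1).2 hA
  have hup : A - a 0 < B := hasSum_lt (fun n => (hab n).le) (hab 0) hshift hB
  constructor <;> linarith

lemma exists_tprod_one_add_eq_cexp {ι : Type*} {f : ι → ℂ} (hf : Summable fun i => ‖f i‖)
    (hne : ∀ i, 1 + f i ≠ 0) :
    ∃ S : ℂ, ∏' i, (1 + f i) = cexp S ∧ HasSum (fun i => arg (1 + f i)) S.im := by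
  have hlog := summable_log_one_add_of_summable hf.of_norm
  exact ⟨_, (cexp_tsum_eq_tprod hne hlog).symm, by simpa [log_im] using hasSum_im hlog.hasSum⟩

theorem arg_tprod_div_tprod_mem_Ioo {τ σ : ℕ → ℝ} (hτ : ∀ n, 0 < τ n)
    (hτσ : ∀ n, τ n < σ n) (hστ : ∀ n, σ n < τ (n + 1))
    (hτs : Summable fun n => ‖((τ n : ℂ))⁻¹‖) (hσs : Summable fun n => ‖((σ n : ℂ))⁻¹‖)
    {z : ℂ} (hz : 0 < z.im) :
    arg ((∏' n, (1 + z / τ n)) / ∏' n, (1 + z / σ n)) ∈ Set.Ioo 0 π := by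
  have hne : ∀ t : ℝ, 0 < t → 1 + z / t ≠ 0 := fun t ht h =>
    (div_pos hz ht).ne' (by simpa using congrArg im h)
  have hσ : ∀ n, 0 < σ n := fun n => (hτ n).trans (hτσ n)
  obtain ⟨S, hP, hA⟩ := exists_tprod_one_add_eq_cexp (summable_norm_div_of_norm_inv hτs z)
    fun n => hne _ (hτ n)
  obtain ⟨T, hQ, hB⟩ := exists_tprod_one_add_eq_cexp (summable_norm_div_of_norm_inv hσs z)
    fun n => hne _ (hσ n)
  obtain ⟨hpos, hlt⟩ := sub_pos_and_sub_lt_of_interlacing hA hB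
    (fun n => arg_one_add_div_lt_of_lt hz (hτ n) (hτσ n))
    (fun n => arg_one_add_div_lt_of_lt hz (hσ n) (hστ n))
  have hπ := arg_le_pi (1 + z / τ 0)
  have harg : arg (cexp (S - T)) = S.im - T.im := by
    rw [arg_exp, sub_im, toIocMod_eq_self two_pi_pos]
    constructor <;> linarith [pi_pos]
  rw [hP, hQ, ← Complex.exp_sub, harg]
  exact ⟨hpos, by linarith⟩

theorem rFun_of_conj_symm {F : ℂ → ℂ} (hmero : ∀ z, MeromorphicAt F z)
    (hconj : ∀ z, F (conj z) = conj (F z)) (hupper : ∀ z, 0 < z.im → 0 ≤ (F z).im) :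
    RFun F := by
  refine ⟨hmero, fun x _ => ?_, fun z hz _ => ?_⟩
  · exact conj_eq_iff_im.1 <| (hconj x).symm.trans <| by rw [conj_ofReal]
  · rcases hz.lt_or_gt with hneg | hpos
    · have := hupper (conj z) (by simpa using hneg)
      rw [hconj, conj_im] at this
      nlinarith
    · exact mul_nonneg (hupper z hpos) hpos.le

/-- Let `0 < τ₀ < σ₀ < τ₁ < σ₁ < ⋯` with `Σ 1/τ_ν < ∞`.  Then the product
`G(z) = ∏_ν (1+z/τ_ν)/(1+z/σ_ν)` converges (is multipliable away from the poles) to a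
meromorphic function on `ℂ`, `0 < Arg G(z) < π` whenever `Im z > 0`, and `G` is an
S-function. -/
theorem stmt19 (τ σ : ℕ → ℝ)
    (hτ0 : 0 < τ 0) (hτσ : ∀ n, τ n < σ n) (hστ : ∀ n, σ n < τ (n + 1))
    (hsum : Summable fun n => 1 / τ n) :
    (∀ z : ℂ, (∀ n, (1 : ℂ) + z / (σ n : ℂ) ≠ 0) →
      Multipliable fun n => ((1 : ℂ) + z / (τ n : ℂ)) / ((1 : ℂ) + z / (σ n : ℂ))) ∧
    (∀ z : ℂ, MeromorphicAt
      (fun w => ∏' n, ((1 : ℂ) + w / (τ n : ℂ)) / ((1 : ℂ) + w / (σ n : ℂ))) z) ∧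
    (∀ z : ℂ, 0 < z.im →
      0 < (∏' n, ((1 : ℂ) + z / (τ n : ℂ)) / ((1 : ℂ) + z / (σ n : ℂ))).arg ∧
      (∏' n, ((1 : ℂ) + z / (τ n : ℂ)) / ((1 : ℂ) + z / (σ n : ℂ))).arg < Real.pi) ∧
    SFun (fun z => ∏' n, ((1 : ℂ) + z / (τ n : ℂ)) / ((1 : ℂ) + z / (σ n : ℂ))) := by
  have hτ : ∀ n, 0 < τ n := fun n => Nat.rec hτ0 (fun k ih => ih.trans ((hτσ k).trans (hστ k))) n
  have hσ : ∀ n, 0 < σ n := fun n => (hτ n).trans (hτσ n)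
  have hτs := summable_norm_inv_ofReal hτ hsum
  have hσs := summable_norm_inv_ofReal hσ <| hsum.of_nonneg_of_le
    (fun n => (one_div_pos.2 (hσ n)).le) fun n => one_div_le_one_div_of_le (hτ n) (hτσ n).le
  have hprod : ∀ z : ℂ, HasProd (fun n => (1 + z / τ n) / (1 + z / σ n))
      ((∏' n, (1 + z / τ n)) / ∏' n, (1 + z / σ n)) := hasProd_one_add_div_div hτs hσs
  have hP := differentiable_tprod_one_add_div hτs
  have hQ := differentiable_tprod_one_add_div hσs
  have harg := fun (z : ℂ) (hz : 0 < z.im) => arg_tprod_div_tprod_mem_Ioo hτ hτσ hστ hτs hσs hz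
  have hmero : ∀ z : ℂ,
      MeromorphicAt (fun w : ℂ => (∏' n, (1 + w / τ n)) / ∏' n, (1 + w / σ n)) z :=
    fun z => (hP.analyticAt z).meromorphicAt.div (hQ.analyticAt z).meromorphicAt
  refine ⟨fun z _ => (hprod z).multipliable, ?_⟩
  simp only [fun z => (hprod z).tprod_eq]
  refine ⟨hmero, harg, rFun_of_conj_symm hmero (fun z => ?_) fun z hz => ?_, fun x hx => ⟨?_, ?_⟩⟩
  · rw [tprod_one_add_conj_div_ofReal hτs, tprod_one_add_conj_div_ofReal hσs, map_div₀]
  · exact arg_nonneg_iff.1 (harg z hz).1.le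
  · exact (hP.analyticAt x).div (hQ.analyticAt x) <| tprod_one_add_ne_zero_of_summable
      (fun n => (zero_lt_one_add_ofReal_div hx (hσ n)).ne') (summable_norm_div_of_norm_inv hσs x)
  · exact (le_def.1 <| div_nonneg (tprod_nonneg fun n => (zero_lt_one_add_ofReal_div hx (hτ n)).le)
      (tprod_nonneg fun n => (zero_lt_one_add_ofReal_div hx (hσ n)).le)).1
end
end
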